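/- Let A ∈ ℝ^{n×n}, let P ∈ ℝ^{n×n} be symmetric positive definite, and let λ > 0 be such that AᵀP + PA ⪯ −λ·I_n. Let r : [0, ∞) → ℝⁿ be continuous with ‖r(t)‖ ≤ r̄ for all t ≥ 0, and let z : [0, ∞) → ℝⁿ be continuously differentiable with ż(t) = A·z(t) + r(t) and z(0) = 0. Then for all t ≥ 0, ‖z(t)‖ ≤ 2·‖P‖^{3/2}·r̄ / (λ·√(λ_min(P))). -/

import Mathlib

open Matrix

/-- The spectral (ℓ² operator) norm of a real matrix. -/
noncomputable def matSpectralNorm {m n : ℕ} (A : Matrix (Fin m) (Fin n) ℝ) : ℝ :=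
  ‖LinearMap.toContinuousLinearMap (Matrix.toEuclideanLin A)‖

/-- The Euclidean norm of a real vector. -/
noncomputable def euclNorm {n : ℕ} (x : Fin n → ℝ) : ℝ :=
  Real.sqrt (∑ i, x i ^ 2)

/-- The smallest eigenvalue of a symmetric real matrix. -/
noncomputable def lamMin {n : ℕ} {A : Matrix (Fin n) (Fin n) ℝ}
    (hA : A.IsHermitian) : ℝ :=
  ⨅ i, hA.eigenvalues i

section aux
variable {n : ℕ}

private lemma euclNorm_eq (v : Fin n → ℝ) :
    euclNorm v = ‖(WithLp.equiv 2 (Fin n → ℝ)).symm v‖ := by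
  rw [EuclideanSpace.norm_eq]
  simp [euclNorm, Real.norm_eq_abs, sq_abs]

private lemma euclNorm_nonneg (v : Fin n → ℝ) : 0 ≤ euclNorm v := Real.sqrt_nonneg _

private lemma dot_eq_inner (v w : Fin n → ℝ) :
    v ⬝ᵥ w = inner ℝ ((WithLp.equiv 2 (Fin n → ℝ)).symm v) ((WithLp.equiv 2 (Fin n → ℝ)).symm w) := by
  simp [PiLp.inner_apply, dotProduct, RCLike.inner_apply, mul_comm]

private lemma dot_le (v w : Fin n → ℝ) : v ⬝ᵥ w ≤ euclNorm v * euclNorm w := by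
  rw [dot_eq_inner, euclNorm_eq, euclNorm_eq]
  exact real_inner_le_norm _ _

private lemma dot_self_eq (v : Fin n → ℝ) : v ⬝ᵥ v = euclNorm v ^ 2 := by
  rw [euclNorm, Real.sq_sqrt (by positivity)]
  simp [dotProduct, sq]

private lemma norm_mulVec_le (M : Matrix (Fin n) (Fin n) ℝ) (v : Fin n → ℝ) :
    euclNorm (M *ᵥ v) ≤ matSpectralNorm M * euclNorm v := by
  have h := (LinearMap.toContinuousLinearMap (Matrix.toEuclideanLin M)).le_opNorm
    ((WithLp.equiv 2 (Fin n → ℝ)).symm v)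
  rw [euclNorm_eq, euclNorm_eq, matSpectralNorm]
  calc ‖(WithLp.equiv 2 (Fin n → ℝ)).symm (M *ᵥ v)‖
      = ‖LinearMap.toContinuousLinearMap (Matrix.toEuclideanLin M)
          ((WithLp.equiv 2 (Fin n → ℝ)).symm v)‖ := by congr 1
    _ ≤ _ := h

private lemma lamMin_dot_le {P : Matrix (Fin n) (Fin n) ℝ} (hP : P.IsHermitian) (u : Fin n → ℝ) :
    lamMin hP * (u ⬝ᵥ u) ≤ u ⬝ᵥ (P *ᵥ u) := by
  classical
  set U : Matrix (Fin n) (Fin n) ℝ := (hP.eigenvectorUnitary : Matrix (Fin n) (Fin n) ℝ) with hU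
  have hUstar : U * star U = 1 := (Matrix.mem_unitaryGroup_iff).mp hP.eigenvectorUnitary.2
  set y : Fin n → ℝ := star U *ᵥ u with hy
  have hstar : star U = Uᵀ := by
    rw [Matrix.star_eq_conjTranspose, Matrix.conjTranspose_eq_transpose_of_trivial]
  have hvec : u ᵥ* U = y := by
    rw [hy, hstar, Matrix.mulVec_transpose]
  have hyy : y ⬝ᵥ y = u ⬝ᵥ u := by
    rw [hy, Matrix.dotProduct_mulVec, hstar, Matrix.vecMul_transpose, Matrix.mulVec_mulVec,
      ← hstar, hUstar, Matrix.one_mulVec]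
  have hquad : u ⬝ᵥ (P *ᵥ u) = ∑ i, hP.eigenvalues i * y i ^ 2 := by
    conv_lhs => rw [hP.spectral_theorem, Unitary.conjStarAlgAut_apply]
    rw [← Matrix.mulVec_mulVec, ← Matrix.mulVec_mulVec, Matrix.dotProduct_mulVec, hvec, ← hy,
      dotProduct]
    congr 1
    ext i
    rw [Matrix.mulVec_diagonal]
    simp [sq]
    ring
  have hle : ∀ i, lamMin hP ≤ hP.eigenvalues i := fun i =>
    ciInf_le (Set.Finite.bddBelow (Set.finite_range _)) i
  calc lamMin hP * (u ⬝ᵥ u) = ∑ i, lamMin hP * y i ^ 2 := by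
        rw [← hyy, dotProduct, Finset.mul_sum]
        congr 1; ext i; ring
    _ ≤ ∑ i, hP.eigenvalues i * y i ^ 2 :=
        Finset.sum_le_sum fun i _ => mul_le_mul_of_nonneg_right (hle i) (sq_nonneg _)
    _ = u ⬝ᵥ (P *ᵥ u) := hquad.symm

private lemma lamMin_pos [NeZero n] {P : Matrix (Fin n) (Fin n) ℝ} (hP : P.PosDef) :
    0 < lamMin hP.1 := by
  obtain ⟨i, hi⟩ := Finite.exists_min hP.1.eigenvalues
  exact lt_of_lt_of_le (hP.eigenvalues_pos i) (le_ciInf hi)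

private lemma quad_identity (A P : Matrix (Fin n) (Fin n) ℝ) (u v : Fin n → ℝ) :
    (A *ᵥ u + v) ⬝ᵥ (P *ᵥ u) + u ⬝ᵥ (P *ᵥ (A *ᵥ u + v))
      = u ⬝ᵥ ((Aᵀ * P + P * A) *ᵥ u) + (v ⬝ᵥ (P *ᵥ u) + u ⬝ᵥ (P *ᵥ v)) := by
  have h1 : u ⬝ᵥ ((Aᵀ * P) *ᵥ u) = (A *ᵥ u) ⬝ᵥ (P *ᵥ u) := by
    rw [← Matrix.mulVec_mulVec, Matrix.dotProduct_mulVec, Matrix.vecMul_transpose]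
  have h2 : u ⬝ᵥ ((P * A) *ᵥ u) = u ⬝ᵥ (P *ᵥ (A *ᵥ u)) := by
    rw [← Matrix.mulVec_mulVec]
  rw [Matrix.add_mulVec, dotProduct_add, h1, h2, add_dotProduct,
    Matrix.mulVec_add, dotProduct_add]
  ring

private lemma hasDerivAt_quadForm (P : Matrix (Fin n) (Fin n) ℝ) {z : ℝ → Fin n → ℝ}
    {w : Fin n → ℝ} {t : ℝ} (hz : HasDerivAt z w t) :
    HasDerivAt (fun s => z s ⬝ᵥ (P *ᵥ z s)) (w ⬝ᵥ (P *ᵥ z t) + z t ⬝ᵥ (P *ᵥ w)) t := by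
  have hcoord : ∀ i, HasDerivAt (fun s => z s i) (w i) t := fun i => (hasDerivAt_pi.mp hz) i
  have hterm : ∀ i ∈ Finset.univ, HasDerivAt (fun s => z s i * ∑ j, P i j * z s j)
      (w i * (∑ j, P i j * z t j) + z t i * (∑ j, P i j * w j)) t := by
    intro i _
    exact (hcoord i).mul (HasDerivAt.fun_sum fun j _ => (hcoord j).const_mul (P i j))
  have heq : (fun s => z s ⬝ᵥ (P *ᵥ z s))
      = fun s => ∑ i, z s i * ∑ j, P i j * z s j := by
    funext s; simp [dotProduct, Matrix.mulVec]
  rw [heq]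
  have := HasDerivAt.fun_sum hterm
  exact this.congr_deriv (Eq.symm (by simp [dotProduct, Matrix.mulVec, Finset.sum_add_distrib]))

private lemma slope_cond {f : ℝ → ℝ} {d x : ℝ} (h : HasDerivAt f d x) :
    ∀ r, d < r → ∃ᶠ z in nhdsWithin x (Set.Ioi x), (z - x)⁻¹ * (f z - f x) < r := by
  intro r hr
  have ht : Filter.Tendsto (slope f x) (nhdsWithin x {x}ᶜ) (nhds d) :=
    hasDerivAt_iff_tendsto_slope.mp h
  have ht2 : Filter.Tendsto (slope f x) (nhdsWithin x (Set.Ioi x)) (nhds d) :=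
    ht.mono_left (nhdsWithin_mono x (fun z hz => ne_of_gt hz))
  have hev : ∀ᶠ z in nhdsWithin x (Set.Ioi x), slope f x z < r :=
    ht2.eventually (gt_mem_nhds hr)
  refine (hev.mono fun z hz => ?_).frequently
  rwa [slope_def_field, div_eq_inv_mul] at hz

private lemma V_le_of_deriv_le {V d : ℝ → ℝ} {K ε : ℝ} (hK : K < 0) (hε : 0 ≤ ε)
    (hV : ∀ x, 0 ≤ x → HasDerivAt V (d x) x) (hV0 : V 0 = 0)
    (hbound : ∀ x, 0 ≤ x → d x ≤ K * V x + ε) :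
    ∀ t, 0 ≤ t → V t ≤ ε / (-K) := by
  intro t ht
  have hg := le_gronwallBound_of_liminf_deriv_right_le (f := V) (f' := d) (a := 0) (b := t)
    (δ := 0) (K := K) (ε := ε)
    (fun x hx => (hV x hx.1).continuousAt.continuousWithinAt)
    (fun x hx => slope_cond (hV x hx.1))
    (le_of_eq hV0)
    (fun x hx => hbound x hx.1)
    t ⟨ht, le_refl t⟩
  rw [sub_zero, gronwallBound_of_K_ne_0 hK.ne] at hg
  set E := Real.exp (K * t) with hE
  have hE1 : E ≤ 1 := Real.exp_le_one_iff.mpr (mul_nonpos_of_nonpos_of_nonneg hK.le ht)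
  have hE0 : 0 < E := Real.exp_pos _
  calc V t ≤ 0 * E + ε / K * (E - 1) := hg
    _ = ε * (1 - E) / (-K) := by field_simp; ring
    _ ≤ ε * 1 / (-K) := by gcongr <;> linarith
    _ = ε / (-K) := by rw [mul_one]

end aux

set_option maxHeartbeats 1000000 in
/-- Input-to-state Lyapunov bound: if `P ≻ 0` and `λ > 0` satisfy
`AᵀP + PA ⪯ −λI`, `r` is continuous on `[0,∞)` with `‖r(t)‖ ≤ r̄`, and `z` solves
`ż = Az + r`, `z(0) = 0`, then `‖z(t)‖ ≤ 2‖P‖^{3/2}·r̄/(λ·√(λ_min(P)))` for all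
`t ≥ 0`. -/
theorem iss_lyapunov_bound {n : ℕ}
    (A P : Matrix (Fin n) (Fin n) ℝ) (hP : P.PosDef)
    (lam : ℝ) (hlam : 0 < lam)
    (hLyap : ((-lam) • (1 : Matrix (Fin n) (Fin n) ℝ) - (Aᵀ * P + P * A)).PosSemidef)
    (r : ℝ → Fin n → ℝ) (rbar : ℝ)
    (hrcont : ContinuousOn r (Set.Ici 0))
    (hrbound : ∀ t : ℝ, 0 ≤ t → euclNorm (r t) ≤ rbar)
    (z : ℝ → Fin n → ℝ)
    (hz : ∀ t : ℝ, 0 ≤ t → HasDerivAt z (A.mulVec (z t) + r t) t)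
    (hz0 : z 0 = 0) :
    ∀ t : ℝ, 0 ≤ t →
      euclNorm (z t) ≤
        2 * matSpectralNorm P ^ ((3 : ℝ) / 2) * rbar /
          (lam * Real.sqrt (lamMin hP.1)) := by
  intro t ht
  rcases Nat.eq_zero_or_pos n with hn | hn
  · subst hn
    simp [euclNorm, lamMin, Real.iInf_of_isEmpty]
  haveI : NeZero n := ⟨hn.ne'⟩
  set pn := matSpectralNorm P with hpn_def
  set lmin := lamMin hP.1 with hlmin_def
  have hlmin : 0 < lmin := lamMin_pos hP
  have hrbar : 0 ≤ rbar := le_trans (euclNorm_nonneg _) (hrbound 0 le_rfl)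
  -- positivity of the spectral norm
  have hpn : 0 < pn := by
    set u : Fin n → ℝ := fun _ => 1 with hu_def
    have hu : u ≠ 0 := by
      intro h
      have := congrFun h ⟨0, hn⟩
      simp [hu_def] at this
    have h1 : 0 < u ⬝ᵥ (P *ᵥ u) := by
      have := (posDef_iff_dotProduct_mulVec.mp hP).2 hu
      rwa [star_trivial] at this
    have h2 : u ⬝ᵥ (P *ᵥ u) ≤ euclNorm u * (pn * euclNorm u) :=
      le_trans (dot_le _ _) (by
        exact mul_le_mul_of_nonneg_left (norm_mulVec_le P u) (euclNorm_nonneg u))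
    nlinarith [euclNorm_nonneg u, sq_nonneg (euclNorm u), lt_of_lt_of_le h1 h2]
  set K : ℝ := -(lam / (2 * pn)) with hK_def
  set ε : ℝ := 2 * pn ^ 2 * rbar ^ 2 / lam with hε_def
  have hK : K < 0 := by
    rw [hK_def, neg_lt, neg_zero]
    positivity
  have hε : 0 ≤ ε := by positivity
  set V : ℝ → ℝ := fun s => z s ⬝ᵥ (P *ᵥ z s) with hV_def
  set d : ℝ → ℝ := fun s =>
    (A *ᵥ z s + r s) ⬝ᵥ (P *ᵥ z s) + z s ⬝ᵥ (P *ᵥ (A *ᵥ z s + r s)) with hd_def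
  have hV : ∀ x, 0 ≤ x → HasDerivAt V (d x) x := fun x hx =>
    hasDerivAt_quadForm P (hz x hx)
  have hV0 : V 0 = 0 := by simp [hV_def, hz0]
  have hbound : ∀ x, 0 ≤ x → d x ≤ K * V x + ε := by
    intro x hx
    have hru : euclNorm (r x) ≤ rbar := hrbound x hx
    set u := z x with hu_def
    set nu := euclNorm u with hnu_def
    have hnu : 0 ≤ nu := euclNorm_nonneg u
    have hid : d x = u ⬝ᵥ ((Aᵀ * P + P * A) *ᵥ u) + (r x ⬝ᵥ (P *ᵥ u) + u ⬝ᵥ (P *ᵥ r x)) :=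
      quad_identity A P u (r x)
    have hQ : u ⬝ᵥ ((Aᵀ * P + P * A) *ᵥ u) ≤ -lam * nu ^ 2 := by
      have h0 := hLyap.dotProduct_mulVec_nonneg u
      rw [star_trivial, Matrix.sub_mulVec, dotProduct_sub, Matrix.smul_mulVec,
        Matrix.one_mulVec, dotProduct_smul, dot_self_eq] at h0
      simp only [smul_eq_mul] at h0
      linarith
    have hPu : euclNorm (P *ᵥ u) ≤ pn * nu := norm_mulVec_le P u
    have hPr : euclNorm (P *ᵥ r x) ≤ pn * rbar :=
      le_trans (norm_mulVec_le P (r x)) (mul_le_mul_of_nonneg_left hru hpn.le)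
    have hcross1 : r x ⬝ᵥ (P *ᵥ u) ≤ rbar * (pn * nu) :=
      le_trans (dot_le _ _)
        (mul_le_mul hru hPu (euclNorm_nonneg _) hrbar)
    have hcross2 : u ⬝ᵥ (P *ᵥ r x) ≤ nu * (pn * rbar) :=
      le_trans (dot_le _ _)
        (mul_le_mul_of_nonneg_left hPr hnu)
    have hVup : V x ≤ pn * nu ^ 2 := by
      have : V x ≤ nu * (pn * nu) := le_trans (dot_le _ _)
        (mul_le_mul_of_nonneg_left hPu hnu)
      nlinarith
    have hyoung : (2 * pn * rbar * nu - lam / 2 * nu ^ 2) * lam ≤ 2 * pn ^ 2 * rbar ^ 2 := by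
      nlinarith [sq_nonneg (lam * nu - 2 * pn * rbar)]
    have hyoung' : 2 * pn * rbar * nu - lam / 2 * nu ^ 2 ≤ ε :=
      (le_div_iff₀ hlam).mpr hyoung
    have hKV : -(lam / 2) * nu ^ 2 ≤ K * V x := by
      have h3 : K * (pn * nu ^ 2) ≤ K * V x := mul_le_mul_of_nonpos_left hVup hK.le
      have h4 : K * (pn * nu ^ 2) = -(lam / 2) * nu ^ 2 := by
        rw [hK_def]; field_simp
      rw [← h4]; exact h3
    calc d x = u ⬝ᵥ ((Aᵀ * P + P * A) *ᵥ u) + (r x ⬝ᵥ (P *ᵥ u) + u ⬝ᵥ (P *ᵥ r x)) := hid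
      _ ≤ -lam * nu ^ 2 + (rbar * (pn * nu) + nu * (pn * rbar)) := by linarith
      _ = -lam * nu ^ 2 + 2 * pn * rbar * nu := by ring
      _ ≤ -(lam / 2) * nu ^ 2 + ε := by nlinarith
      _ ≤ K * V x + ε := by linarith
  have hVt : V t ≤ ε / (-K) := V_le_of_deriv_le hK hε hV hV0 hbound t ht
  have hVlow : lmin * euclNorm (z t) ^ 2 ≤ V t := by
    have := lamMin_dot_le hP.1 (z t)
    rwa [dot_self_eq] at this
  set R : ℝ := 2 * pn ^ ((3 : ℝ) / 2) * rbar / (lam * Real.sqrt lmin) with hR_def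
  have hpow : (pn ^ ((3 : ℝ) / 2)) ^ 2 = pn ^ 3 := by
    rw [← Real.rpow_natCast (pn ^ ((3 : ℝ) / 2)) 2, ← Real.rpow_mul hpn.le]
    norm_num
  have hR : 0 ≤ R := by
    rw [hR_def]
    positivity
  have hRsq : R ^ 2 = ε / (-K) / lmin := by
    rw [hR_def]
    simp only [div_pow, mul_pow]
    rw [Real.sq_sqrt hlmin.le, hpow, hε_def, hK_def, neg_neg]
    field_simp
  have hsq : euclNorm (z t) ^ 2 ≤ R ^ 2 := by
    rw [hRsq, le_div_iff₀ hlmin]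
    nlinarith
  calc euclNorm (z t) = Real.sqrt (euclNorm (z t) ^ 2) :=
        (Real.sqrt_sq (euclNorm_nonneg _)).symm
    _ ≤ Real.sqrt (R ^ 2) := Real.sqrt_le_sqrt hsq
    _ = R := Real.sqrt_sq hR
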